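/- The average of the function V(x₁,x₂) = |x₁ x₂| / (x₁² + x₂²) over the square [-1,1]² differs from its average over the unit disk B(0,1): (1/4)∫_{[-1,1]²} V dx = (1/2)log 2 ≠ 1/π = (1/π)∫_{B(0,1)} V dx. -/

import Mathlib

/-!
On the square, Fubini and the antiderivative `(|x| / 2) log (x² + y²)` in `y` reduce the integral
to `∫₋₁¹ |x| (log (x² + 1) - log x²) dx`, whose antiderivative on `x > 0` is
`((x² + 1) log (x² + 1) - x² log x²) / 2`; this gives `2 log 2`. On the disk, `V` is homogeneous
of degree `0`, so in polar coordinates it only sees the angle, `V = |cos θ sin θ|`, and the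
integral factors as `(∫₀¹ r dr) (∫₋π^π |cos θ sin θ| dθ) = 1/2 · 2`.
-/

open MeasureTheory Real Set

theorem Function.Even.integral_neg_self {f : ℝ → ℝ} (hf : Function.Even f) {a : ℝ}
    (hint : IntervalIntegrable f volume (-a) a) :
    ∫ x in -a..a, f x = 2 * ∫ x in 0..a, f x := by
  have hleft : ∫ x in -a..0, f x = ∫ x in 0..a, f x := by
    simpa [hf _] using (intervalIntegral.integral_comp_neg (a := 0) (b := a) f).symm
  have h0 : (0 : ℝ) ∈ uIcc (-a) a := by
    rcases le_total 0 a with h | h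
    · exact mem_uIcc.2 (.inl ⟨by linarith, h⟩)
    · exact mem_uIcc.2 (.inr ⟨h, by linarith⟩)
  rw [← intervalIntegral.integral_add_adjacent_intervals (b := 0)
    (hint.mono_set (uIcc_subset_uIcc_left h0)) (hint.mono_set (uIcc_subset_uIcc_right h0)),
    hleft, two_mul]

-- `x / 0 = 0` gives `V 0 = 0`, the paper's convention at the origin.
noncomputable def V (p : ℝ × ℝ) : ℝ := |p.1 * p.2| / (p.1 ^ 2 + p.2 ^ 2)

lemma measurable_V : Measurable V := by
  unfold V; fun_prop

lemma abs_V_le (p : ℝ × ℝ) : |V p| ≤ 1 / 2 := by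
  rw [V, abs_div, abs_abs, abs_of_nonneg (by positivity : (0 : ℝ) ≤ p.1 ^ 2 + p.2 ^ 2), abs_mul]
  apply div_le_of_le_mul₀ (by positivity) (by norm_num)
  nlinarith [sq_nonneg (|p.1| - |p.2|), sq_abs p.1, sq_abs p.2]

lemma integrableOn_V {s : Set (ℝ × ℝ)} (hs : volume s ≠ ⊤) : IntegrableOn V s :=
  Measure.integrableOn_of_bounded hs measurable_V.aestronglyMeasurable
    (.of_forall fun p => (Real.norm_eq_abs _).trans_le (abs_V_le p))

lemma V_mk_neg_right (x y : ℝ) : V (x, -y) = V (x, y) := by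
  simp [V]

lemma continuous_V_mk_left {x : ℝ} (hx : x ≠ 0) : Continuous fun y => V (x, y) :=
  (continuous_const.mul continuous_id).abs.div (by fun_prop) fun y => by positivity

lemma hasDerivAt_mul_log_sq_add_sq {x y : ℝ} (hx : x ≠ 0) (hy : 0 ≤ y) :
    HasDerivAt (fun y => |x| / 2 * log (x ^ 2 + y ^ 2)) (V (x, y)) y := by
  have hsq : HasDerivAt (fun y : ℝ => x ^ 2 + y ^ 2) (2 * y) y := by
    simpa using (hasDerivAt_pow 2 y).const_add (x ^ 2)
  refine ((hsq.log (by positivity)).const_mul (|x| / 2)).congr_deriv ?_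
  simp only [V, abs_mul, abs_of_nonneg hy]
  field_simp

lemma integral_V_mk_left {x b : ℝ} (hx : x ≠ 0) (hb : 0 ≤ b) :
    ∫ y in -b..b, V (x, y) = |x| * (log (x ^ 2 + b ^ 2) - log (x ^ 2)) := by
  have hcont := continuous_V_mk_left hx
  rw [Function.Even.integral_neg_self (fun y => V_mk_neg_right x y) (hcont.intervalIntegrable _ _),
    intervalIntegral.integral_eq_sub_of_hasDerivAt
      (fun y hy => hasDerivAt_mul_log_sq_add_sq hx (uIcc_of_le hb ▸ hy).1)
      (hcont.intervalIntegrable _ _)]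
  rw [zero_pow two_ne_zero, add_zero]
  ring

lemma continuous_abs_mul_log_sq : Continuous fun x : ℝ => |x| * log (x ^ 2) := by
  have h : (fun x : ℝ => |x| * log (x ^ 2)) = fun x => 2 * (|x| * log |x|) := by
    funext x
    rw [← log_abs, abs_pow, log_pow]
    push_cast; ring
  rw [h]
  exact continuous_const.mul (continuous_mul_log.comp continuous_abs)

lemma hasDerivAt_mul_log_sq_add_one_sub {x : ℝ} (hx : x ≠ 0) :
    HasDerivAt (fun x => ((x ^ 2 + 1) * log (x ^ 2 + 1) - x ^ 2 * log (x ^ 2)) / 2)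
      (x * (log (x ^ 2 + 1) - log (x ^ 2))) x := by
  have hsq := hasDerivAt_pow 2 x
  have h1 := (hasDerivAt_mul_log (x := x ^ 2 + 1) (by positivity)).comp x (hsq.add_const 1)
  have h2 := (hasDerivAt_mul_log (x := x ^ 2) (by positivity)).comp x hsq
  refine ((h1.sub h2).div_const 2).congr_deriv ?_
  simp only [Nat.cast_ofNat]
  ring

lemma integral_abs_mul_log_sq_add_one_sub :
    ∫ x in (-1)..1, |x| * (log (x ^ 2 + 1) - log (x ^ 2)) = 2 * log 2 := by
  set h : ℝ → ℝ := fun x => |x| * (log (x ^ 2 + 1) - log (x ^ 2))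
  have hcont : Continuous h := by
    simp only [h, mul_sub]
    exact (continuous_abs.mul (Continuous.log (by fun_prop) fun x => by positivity)).sub
      continuous_abs_mul_log_sq
  have heven : Function.Even h := fun x => by simp [h]
  rw [heven.integral_neg_self (hcont.intervalIntegrable _ _)]
  have hG : Continuous fun x : ℝ => ((x ^ 2 + 1) * log (x ^ 2 + 1) - x ^ 2 * log (x ^ 2)) / 2 :=
    ((continuous_mul_log.comp (by fun_prop)).sub
      (continuous_mul_log.comp (by fun_prop))).div_const 2
  rw [intervalIntegral.integral_eq_sub_of_hasDerivAt_of_le zero_le_one hG.continuousOn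
    (fun x hx => (hasDerivAt_mul_log_sq_add_one_sub hx.1.ne').congr_deriv (by
      simp only [h, abs_of_pos hx.1])) (hcont.intervalIntegrable _ _)]
  norm_num

lemma integral_V_square : ∫ p in Icc (-1 : ℝ) 1 ×ˢ Icc (-1 : ℝ) 1, V p = 2 * log 2 := by
  have hint : IntegrableOn V (Icc (-1 : ℝ) 1 ×ˢ Icc (-1 : ℝ) 1) :=
    integrableOn_V (isCompact_Icc.prod isCompact_Icc).measure_lt_top.ne
  rw [Measure.volume_eq_prod] at hint ⊢
  rw [setIntegral_prod _ hint, integral_Icc_eq_integral_Ioc,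
    ← intervalIntegral.integral_of_le (by norm_num), ← integral_abs_mul_log_sq_add_one_sub]
  refine intervalIntegral.integral_congr_ae ?_
  filter_upwards [volume.ae_ne 0] with x hx _
  rw [integral_Icc_eq_integral_Ioc, ← intervalIntegral.integral_of_le (by norm_num),
    integral_V_mk_left hx zero_le_one, one_pow]

lemma setIntegral_unit_disk_eq_polarCoord (f : ℝ × ℝ → ℝ) :
    ∫ p in {p : ℝ × ℝ | p.1 ^ 2 + p.2 ^ 2 < 1}, f p
      = ∫ q in Ioo (0 : ℝ) 1 ×ˢ Ioo (-π) π, q.1 * f (polarCoord.symm q) := by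
  set D := {p : ℝ × ℝ | p.1 ^ 2 + p.2 ^ 2 < 1}
  have hD : MeasurableSet D := measurableSet_lt (by fun_prop) measurable_const
  have hpolar : polarCoord.target ∩ polarCoord.symm ⁻¹' D = Ioo (0 : ℝ) 1 ×ˢ Ioo (-π) π := by
    ext ⟨r, θ⟩
    have hr : (r * cos θ) ^ 2 + (r * sin θ) ^ 2 = r ^ 2 := by
      linear_combination r ^ 2 * cos_sq_add_sin_sq θ
    simp only [polarCoord_target, polarCoord_symm_apply, D, mem_inter_iff, mem_prod, mem_preimage,
      mem_ofPred_eq, mem_Ioi, mem_Ioo, hr]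
    constructor
    · rintro ⟨⟨hr0, hθ⟩, hr1⟩
      exact ⟨⟨hr0, by nlinarith⟩, hθ⟩
    · rintro ⟨⟨hr0, hr1⟩, hθ⟩
      exact ⟨⟨hr0, hθ⟩, by nlinarith⟩
  rw [← integral_indicator hD, ← integral_comp_polarCoord_symm, ← hpolar,
    ← setIntegral_indicator (hD.preimage continuous_polarCoord_symm.measurable)]
  simp only [smul_eq_mul, indicator_mul_right]
  rfl

lemma V_polarCoord_symm {r : ℝ} (hr : 0 < r) (θ : ℝ) :
    V (polarCoord.symm (r, θ)) = |cos θ * sin θ| := by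
  have hden : (r * cos θ) ^ 2 + (r * sin θ) ^ 2 = r ^ 2 := by
    linear_combination r ^ 2 * cos_sq_add_sin_sq θ
  rw [polarCoord_symm_apply, V, hden,
    show r * cos θ * (r * sin θ) = r ^ 2 * (cos θ * sin θ) by ring, abs_mul,
    abs_of_pos (by positivity : 0 < r ^ 2)]
  field_simp

lemma integral_abs_cos_mul_sin : ∫ θ in -π..π, |cos θ * sin θ| = 2 := by
  have hcont : Continuous fun θ => |cos θ * sin θ| := by fun_prop
  have habs : ∫ u in (-1 : ℝ)..1, |u| = 1 := by
    rw [Function.Even.integral_neg_self abs_neg (continuous_abs.intervalIntegrable _ _),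
      intervalIntegral.integral_congr (f := fun u : ℝ => |u|) (g := fun u => u)
        fun u hu => abs_of_nonneg (uIcc_of_le (zero_le_one (α := ℝ)) ▸ hu).1,
      integral_id]
    norm_num
  have hsub : ∫ θ in 0..π, |cos θ| * -sin θ = ∫ u in (1 : ℝ)..(-1), |u| := by
    simpa using intervalIntegral.integral_comp_mul_deriv (a := 0) (b := π) (f := cos)
      (f' := fun θ => -sin θ) (g := fun u => |u|) (fun θ _ => hasDerivAt_cos θ) (by fun_prop)
      continuous_abs
  have hsin : ∫ θ in 0..π, |cos θ * sin θ| = ∫ θ in 0..π, -(|cos θ| * -sin θ) :=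
    intervalIntegral.integral_congr fun θ hθ => by
      rw [uIcc_of_le pi_pos.le] at hθ
      rw [abs_mul, abs_of_nonneg (sin_nonneg_of_nonneg_of_le_pi hθ.1 hθ.2), mul_neg, neg_neg]
  rw [Function.Even.integral_neg_self (fun θ => by simp) (hcont.intervalIntegrable _ _), hsin,
    intervalIntegral.integral_neg, hsub, intervalIntegral.integral_symm, neg_neg, habs, mul_one]

lemma integral_V_unit_disk : ∫ p in {p : ℝ × ℝ | p.1 ^ 2 + p.2 ^ 2 < 1}, V p = 1 := by
  rw [setIntegral_unit_disk_eq_polarCoord,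
    setIntegral_congr_fun (measurableSet_Ioo.prod measurableSet_Ioo)
      (g := fun q => q.1 * |cos q.2 * sin q.2|) fun q hq => by
        simp only [V_polarCoord_symm hq.1.1],
    Measure.volume_eq_prod, setIntegral_prod_mul (fun r : ℝ => r) (fun θ => |cos θ * sin θ|),
    ← integral_Ioc_eq_integral_Ioo, ← integral_Ioc_eq_integral_Ioo,
    ← intervalIntegral.integral_of_le zero_le_one,
    ← intervalIntegral.integral_of_le (by linarith [pi_pos]), integral_id, integral_abs_cos_mul_sin]
  norm_num

lemma setIntegral_euclideanSpace_fin_two {E : Type*} [NormedAddCommGroup E] [NormedSpace ℝ E]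
    (f : ℝ × ℝ → E) (s : Set (ℝ × ℝ)) :
    ∫ x in (fun x : EuclideanSpace ℝ (Fin 2) => (x 0, x 1)) ⁻¹' s, f (x 0, x 1) = ∫ p in s, f p :=
  let e := (MeasurableEquiv.toLp 2 (Fin 2 → ℝ)).symm.trans (MeasurableEquiv.finTwoArrow (α := ℝ))
  ((volume_preserving_finTwoArrow ℝ).comp
    (EuclideanSpace.volume_preserving_symm_measurableEquiv_toLp (Fin 2))).setIntegral_preimage_emb
    e.measurableEmbedding f s

lemma one_div_pi_lt_half_mul_log_two : 1 / π < 1 / 2 * log 2 := by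
  have h : 1 / π < 1 / 3.14 := one_div_lt_one_div_of_lt (by norm_num) pi_gt_d2
  linarith [log_two_gt_d9]

/-- The average of `V(x) = |x₁x₂|/(x₁²+x₂²)` over the square `[-1,1]²` is `(1/2) log 2`,
its average over the open unit disk is `1/π`, and these two averages differ. -/
theorem stmt_8 :
    (1 / 4) * (∫ x in (WithLp.ofLp ⁻¹' (Set.univ.pi fun _ : Fin 2 => Set.Icc (-1:ℝ) 1) :
          Set (EuclideanSpace ℝ (Fin 2))),
        |x 0 * x 1| / ((x 0) ^ 2 + (x 1) ^ 2)
        ∂(volume : Measure (EuclideanSpace ℝ (Fin 2)))) = (1 / 2) * Real.log 2 ∧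
    (1 / Real.pi) * (∫ x in Metric.ball (0 : EuclideanSpace ℝ (Fin 2)) 1,
        |x 0 * x 1| / ((x 0) ^ 2 + (x 1) ^ 2)) = 1 / Real.pi ∧
    (1 / 2) * Real.log 2 ≠ 1 / Real.pi := by
  have hsquare : (WithLp.ofLp ⁻¹' (univ.pi fun _ : Fin 2 => Icc (-1 : ℝ) 1) :
      Set (EuclideanSpace ℝ (Fin 2))) = (fun x => (x 0, x 1)) ⁻¹' (Icc (-1) 1 ×ˢ Icc (-1) 1) := by
    ext x
    simp only [mem_preimage, mem_univ_pi, mem_prod, Fin.forall_fin_two]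
  have hball : Metric.ball (0 : EuclideanSpace ℝ (Fin 2)) 1
      = (fun x => (x 0, x 1)) ⁻¹' {p : ℝ × ℝ | p.1 ^ 2 + p.2 ^ 2 < 1} := by
    ext x
    simp [EuclideanSpace.norm_eq, Fin.sum_univ_two, sqrt_lt' one_pos]
  refine ⟨?_, ?_, one_div_pi_lt_half_mul_log_two.ne'⟩
  · rw [hsquare]
    change 1 / 4 * ∫ x : EuclideanSpace ℝ (Fin 2) in _, V (x 0, x 1) = _
    rw [setIntegral_euclideanSpace_fin_two, integral_V_square]
    ring
  · rw [hball]
    change 1 / π * ∫ x : EuclideanSpace ℝ (Fin 2) in _, V (x 0, x 1) = _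
    rw [setIntegral_euclideanSpace_fin_two, integral_V_unit_disk, mul_one]
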